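/- Let u, v ∈ ℂ^n be unit vectors with x := |⟨u,v⟩|, let A := (1/2)(u u* + v v*), and let λ₁, …, λ_n be the real eigenvalues of the Hermitian matrix A counted with multiplicity. Then the von Neumann entropy of A satisfies Σ_{i=1}^n (−λ_i · log₂ λ_i) = 1 − (1/2)(1−x)·log₂(1−x) − (1/2)(1+x)·log₂(1+x), with the convention 0 · log₂ 0 = 0. (This is the entropy computation H(AB)_{ψ}[x] = 1 − ½(1−x)log₂(1−x) − ½(1+x)log₂(1+x) for the uniform mixture of two pure states with overlap x.) -/

import Mathlib

/-!
`A` has rank at most two, trace `1` and `tr A² = (1 + x²)/2`. So its spectrum consists of zeros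
and two numbers `a, b` with `a + b = 1` and `a² + b² = (1 + x²)/2`, i.e. `(a - b)² = x²`, which
forces `{a, b} = {(1 + x)/2, (1 - x)/2}`; the zeros do not contribute to the entropy.
-/

open Matrix

/-- The rank-one outer product `u u*` of a vector, with entries `u_i · conj (u_j)`. -/
def outer {n : ℕ} (u : Fin n → ℂ) : Matrix (Fin n) (Fin n) ℂ :=
  Matrix.vecMulVec u (star u)

/-- The summand `−λ·log₂ λ` of the von Neumann entropy, with the convention
`0 · log₂ 0 = 0` (note `Real.logb 2 0 = 0` in Mathlib). -/
noncomputable def negMulLog2 (l : ℝ) : ℝ := -(l * Real.logb 2 l)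

open Finset

theorem Finset.exists_sum_comp_eq_add_of_card_le_two {ι M β : Type*} [Zero M] [AddCommMonoid β]
    {s : Finset ι} (hs : #s ≤ 2) (f : ι → M) :
    ∃ a b : M, ∀ g : M → β, g 0 = 0 → ∑ i ∈ s, g (f i) = g a + g b := by
  classical
  interval_cases hcard : #s
  · exact ⟨0, 0, fun g hg => by simp [card_eq_zero.mp hcard, hg]⟩
  · obtain ⟨i, rfl⟩ := card_eq_one.mp hcard
    exact ⟨f i, 0, fun g hg => by simp [hg]⟩
  · obtain ⟨i, j, hij, rfl⟩ := card_eq_two.mp hcard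
    exact ⟨f i, f j, fun g _ => sum_pair hij⟩

lemma negMulLog2_half (y : ℝ) : negMulLog2 (y / 2) = y / 2 - y / 2 * Real.logb 2 y := by
  rcases eq_or_ne y 0 with rfl | hy
  · simp [negMulLog2]
  · rw [negMulLog2, Real.logb_div hy two_ne_zero, Real.logb_self_eq_one one_lt_two]
    ring

lemma negMulLog2_add_negMulLog2_of_add_of_sq_add_sq {a b x : ℝ} (h1 : a + b = 1)
    (h2 : a ^ 2 + b ^ 2 = (1 + x ^ 2) / 2) :
    negMulLog2 a + negMulLog2 b
      = 1 - (1 / 2) * (1 - x) * Real.logb 2 (1 - x) - (1 / 2) * (1 + x) * Real.logb 2 (1 + x) := by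
  have key : ∀ a b : ℝ, a + b = 1 → a - b = x →
      negMulLog2 a + negMulLog2 b = 1 - (1 / 2) * (1 - x) * Real.logb 2 (1 - x)
        - (1 / 2) * (1 + x) * Real.logb 2 (1 + x) := by
    intro a b h1 hx
    obtain ⟨rfl, rfl⟩ : a = (1 + x) / 2 ∧ b = (1 - x) / 2 := ⟨by linarith, by linarith⟩
    rw [negMulLog2_half, negMulLog2_half]
    ring
  have hsq : (a - b) ^ 2 = x ^ 2 := by linear_combination 2 * h2 - (a + b + 1) * h1
  rcases sq_eq_sq_iff_eq_or_eq_neg.mp hsq with h | h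
  · exact key a b h1 h
  · rw [add_comm]
    exact key b a (by linarith) (by linarith)

namespace Matrix

theorem rank_add_le {m n K : Type*} [Fintype m] [Fintype n] [Field K] (A B : Matrix m n K) :
    (A + B).rank ≤ A.rank + B.rank := by
  have hrange : LinearMap.range (A + B).mulVecLin ≤
      LinearMap.range A.mulVecLin ⊔ LinearMap.range B.mulVecLin := by
    rintro _ ⟨w, rfl⟩
    rw [mulVecLin_add]
    exact Submodule.add_mem_sup (LinearMap.mem_range_self _ w) (LinearMap.mem_range_self _ w)
  exact (Submodule.finrank_mono hrange).trans (Submodule.finrank_add_le_finrank_add_finrank _ _)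

namespace IsHermitian

variable {n 𝕜 : Type*} [Fintype n] [DecidableEq n] [RCLike 𝕜] {A : Matrix n n 𝕜}

theorem trace_pow_eq_sum_eigenvalues_pow (hA : A.IsHermitian) (k : ℕ) :
    (A ^ k).trace = ∑ i, (hA.eigenvalues i : 𝕜) ^ k := by
  conv_lhs => rw [hA.spectral_theorem]
  rw [← map_pow, Unitary.conjStarAlgAut_apply, trace_mul_cycle, Unitary.coe_star_mul_self,
    one_mul, diagonal_pow, trace_diagonal]
  rfl

theorem sum_negMulLog2_eigenvalues_of_rank_le_two (hA : A.IsHermitian) (hrank : A.rank ≤ 2)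
    (x : ℝ) (htrace : A.trace = 1) (htrace_sq : (A ^ 2).trace = ((1 + x ^ 2) / 2 : ℝ)) :
    ∑ i, negMulLog2 (hA.eigenvalues i)
      = 1 - (1 / 2) * (1 - x) * Real.logb 2 (1 - x) - (1 / 2) * (1 + x) * Real.logb 2 (1 + x) := by
  classical
  rw [hA.rank_eq_card_non_zero_eigs, Fintype.card_subtype] at hrank
  obtain ⟨a, b, hab⟩ := exists_sum_comp_eq_add_of_card_le_two (β := ℝ) hrank hA.eigenvalues
  have hsum : ∀ g : ℝ → ℝ, g 0 = 0 → ∑ i, g (hA.eigenvalues i) = g a + g b := by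
    intro g hg
    rw [← hab g hg, sum_filter_of_ne]
    intro i _ hgi hi
    exact hgi (by rw [hi, hg])
  have hab_add : a + b = 1 := by
    have h := hA.trace_eq_sum_eigenvalues
    rw [htrace] at h
    exact (hsum id rfl).symm.trans (by exact_mod_cast h.symm)
  have hab_sq : a ^ 2 + b ^ 2 = (1 + x ^ 2) / 2 := by
    have h := hA.trace_pow_eq_sum_eigenvalues_pow 2
    rw [htrace_sq] at h
    exact (hsum (· ^ 2) (zero_pow two_ne_zero)).symm.trans (by exact_mod_cast h.symm)
  rw [hsum negMulLog2 (by simp [negMulLog2])]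
  exact negMulLog2_add_negMulLog2_of_add_of_sq_add_sq hab_add hab_sq

end IsHermitian

end Matrix

lemma rank_outer_le_one {n : ℕ} (u : Fin n → ℂ) : (outer u).rank ≤ 1 :=
  rank_vecMulVec_le _ _

lemma trace_outer {n : ℕ} (u : Fin n → ℂ) : (outer u).trace = star u ⬝ᵥ u := by
  rw [outer, trace_vecMulVec, dotProduct_comm]

lemma trace_outer_mul_outer {n : ℕ} (u v : Fin n → ℂ) :
    (outer u * outer v).trace = (‖star u ⬝ᵥ v‖ ^ 2 : ℝ) := by
  rw [outer, outer, vecMulVec_mul_vecMulVec, trace_vecMulVec, dotProduct_smul, smul_eq_mul,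
    dotProduct_star, dotProduct_comm v, Complex.star_def, RCLike.mul_conj]
  push_cast
  rfl

/-- The entropy computation for the uniform mixture of two pure states with
overlap `x`:
`Σ_i (−λ_i log₂ λ_i) = 1 − ½(1−x)log₂(1−x) − ½(1+x)log₂(1+x)`. -/
theorem entropy_uniform_mixture_two_pure {n : ℕ}
    (u v : Fin n → ℂ) (hu : star u ⬝ᵥ u = 1) (hv : star v ⬝ᵥ v = 1)
    (x : ℝ) (hx : x = ‖star u ⬝ᵥ v‖)
    (A : Matrix (Fin n) (Fin n) ℂ)
    (hAdef : A = ((1 : ℂ) / 2) • (outer u + outer v))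
    (hA : A.IsHermitian) :
    ∑ i, negMulLog2 (hA.eigenvalues i)
      = 1 - (1 / 2) * (1 - x) * Real.logb 2 (1 - x)
          - (1 / 2) * (1 + x) * Real.logb 2 (1 + x) := by
  refine hA.sum_negMulLog2_eigenvalues_of_rank_le_two ?_ x ?_ ?_
  · rw [hAdef, rank_smul_of_mem_nonZeroDivisors _ (mem_nonZeroDivisors_of_ne_zero (by norm_num))]
    exact (rank_add_le _ _).trans (add_le_add (rank_outer_le_one u) (rank_outer_le_one v))
  · rw [hAdef, trace_smul, trace_add, trace_outer, trace_outer, hu, hv]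
    norm_num
  · have hvu : (outer v * outer u).trace = (x ^ 2 : ℝ) := by
      rw [trace_mul_comm, trace_outer_mul_outer, hx]
    rw [hAdef, smul_pow, trace_smul, sq (outer u + outer v), add_mul, mul_add, mul_add, trace_add,
      trace_add, trace_add, hvu, trace_outer_mul_outer, trace_outer_mul_outer,
      trace_outer_mul_outer, hu, hv, ← hx, norm_one, smul_eq_mul, RCLike.ofReal_eq_complex_ofReal]
    push_cast
    ring
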